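/- If Q ∈ R^{n×m} satisfies that S₂S₁Q has orthonormal columns (i.e., (S₂S₁Q)ᵀ(S₂S₁Q) = I), and S₂S₁ satisfies the two-sided embedding bound √(1−ε_L)‖x‖₂ ≤ ‖S₂S₁x‖₂ ≤ √(1+ε_H)‖x‖₂ on the column space of Q, then κ(Q) ≤ √((1−ε_L)/(1+ε_H))⁻¹·1, i.e., κ(Q) ≤ √((1+ε_H)/(1−ε_L)). -/

import Mathlib

open Matrix
open scoped BigOperators

/-- Euclidean norm of a vector in `Fin k → ℝ`. -/
noncomputable def euclNorm {k : ℕ} (x : Fin k → ℝ) : ℝ := Real.sqrt (∑ i, x i ^ 2)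

/-- Largest singular value (spectral norm): sup of `‖A x‖₂` over unit vectors. -/
noncomputable def sigmaMax {n m : ℕ} (A : Matrix (Fin n) (Fin m) ℝ) : ℝ :=
  ⨆ x : {x : Fin m → ℝ // euclNorm x = 1}, euclNorm (A.mulVec x)

/-- Smallest singular value: inf of `‖A x‖₂` over unit vectors. -/
noncomputable def sigmaMin {n m : ℕ} (A : Matrix (Fin n) (Fin m) ℝ) : ℝ :=
  ⨅ x : {x : Fin m → ℝ // euclNorm x = 1}, euclNorm (A.mulVec x)

/-- Frobenius norm. -/
noncomputable def frobNorm {n m : ℕ} (A : Matrix (Fin n) (Fin m) ℝ) : ℝ :=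
  Real.sqrt (∑ i, ∑ j, A i j ^ 2)

/-- Condition number `σ_max / σ_min`. -/
noncomputable def kappa {n m : ℕ} (A : Matrix (Fin n) (Fin m) ℝ) : ℝ :=
  sigmaMax A / sigmaMin A

/- Since `S₂ S₁ Q` has orthonormal columns, `‖S₂ S₁ Q x‖ = 1` for every unit vector `x`; the
embedding bounds then pin `‖Q x‖` between `1/√(1+ε_H)` and `1/√(1-ε_L)`, so
`κ(Q) ≤ √(1+ε_H)/√(1-ε_L)`. -/

lemma euclNorm_eq_sqrt_dotProduct {k : ℕ} (x : Fin k → ℝ) :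
    euclNorm x = Real.sqrt (x ⬝ᵥ x) := by
  simp only [euclNorm, dotProduct, pow_two]

lemma euclNorm_mulVec_of_transpose_mul_self_eq_one {k m : ℕ} {A : Matrix (Fin k) (Fin m) ℝ}
    (hA : Aᵀ * A = 1) (x : Fin m → ℝ) : euclNorm (A *ᵥ x) = euclNorm x := by
  rw [euclNorm_eq_sqrt_dotProduct, euclNorm_eq_sqrt_dotProduct, dotProduct_mulVec,
    ← mulVec_transpose, mulVec_mulVec, hA, one_mulVec]

lemma kappa_le_div {n m : ℕ} {A : Matrix (Fin n) (Fin m) ℝ} {a b : ℝ} (ha : 0 < a) (hb : 0 ≤ b)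
    (hbound : ∀ x : Fin m → ℝ, euclNorm x = 1 → a ≤ euclNorm (A *ᵥ x) ∧ euclNorm (A *ᵥ x) ≤ b) :
    kappa A ≤ b / a := by
  rcases isEmpty_or_nonempty {x : Fin m → ℝ // euclNorm x = 1} with _ | _
  · rw [kappa, sigmaMin, Real.iInf_of_isEmpty, div_zero]
    exact div_nonneg hb ha.le
  · have hmax : sigmaMax A ≤ b := ciSup_le fun x => (hbound x.1 x.2).2
    have hmin : a ≤ sigmaMin A := le_ciInf fun x => (hbound x.1 x.2).1
    exact div_le_div₀ hb hmax ha hmin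

theorem stmt8_general {n m p₁ p₂ : ℕ} (εL εH : ℝ)
    (hL1 : εL < 1) (hH0 : 0 ≤ εH)
    (S₁ : Matrix (Fin p₁) (Fin n) ℝ) (S₂ : Matrix (Fin p₂) (Fin p₁) ℝ)
    (Q : Matrix (Fin n) (Fin m) ℝ)
    (horth : (S₂ * S₁ * Q)ᵀ * (S₂ * S₁ * Q) = 1)
    (hemb : ∀ c : Fin m → ℝ,
      Real.sqrt (1 - εL) * euclNorm (Q.mulVec c) ≤ euclNorm ((S₂ * S₁).mulVec (Q.mulVec c)) ∧
        euclNorm ((S₂ * S₁).mulVec (Q.mulVec c)) ≤ Real.sqrt (1 + εH) * euclNorm (Q.mulVec c)) :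
    kappa Q ≤ Real.sqrt ((1 + εH) / (1 - εL)) := by
  have ht : 0 < Real.sqrt (1 - εL) := Real.sqrt_pos.mpr (by linarith)
  have hs : 0 < Real.sqrt (1 + εH) := Real.sqrt_pos.mpr (by linarith)
  have hbound : ∀ x : Fin m → ℝ, euclNorm x = 1 →
      1 / Real.sqrt (1 + εH) ≤ euclNorm (Q *ᵥ x) ∧ euclNorm (Q *ᵥ x) ≤ 1 / Real.sqrt (1 - εL) := by
    intro x hx
    have hunit : euclNorm ((S₂ * S₁) *ᵥ (Q *ᵥ x)) = 1 := by
      rw [mulVec_mulVec, euclNorm_mulVec_of_transpose_mul_self_eq_one horth, hx]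
    obtain ⟨hlow, hup⟩ := hemb x
    rw [hunit] at hlow hup
    exact ⟨(div_le_iff₀ hs).mpr (by linarith), (le_div_iff₀ ht).mpr (by linarith)⟩
  calc kappa Q ≤ (1 / Real.sqrt (1 - εL)) / (1 / Real.sqrt (1 + εH)) :=
        kappa_le_div (by positivity) (by positivity) hbound
    _ = Real.sqrt ((1 + εH) / (1 - εL)) := by
        rw [Real.sqrt_div (by linarith)]
        field_simp

theorem stmt8 {n m p₁ p₂ : ℕ} (εL εH : ℝ)
    (hL0 : 0 ≤ εL) (hL1 : εL < 1) (hH0 : 0 ≤ εH)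
    (S₁ : Matrix (Fin p₁) (Fin n) ℝ) (S₂ : Matrix (Fin p₂) (Fin p₁) ℝ)
    (Q : Matrix (Fin n) (Fin m) ℝ) (hrank : Q.rank = m)
    (horth : (S₂ * S₁ * Q)ᵀ * (S₂ * S₁ * Q) = 1)
    (hemb : ∀ c : Fin m → ℝ,
      Real.sqrt (1 - εL) * euclNorm (Q.mulVec c) ≤ euclNorm ((S₂ * S₁).mulVec (Q.mulVec c)) ∧
        euclNorm ((S₂ * S₁).mulVec (Q.mulVec c)) ≤ Real.sqrt (1 + εH) * euclNorm (Q.mulVec c)) :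
    kappa Q ≤ Real.sqrt ((1 + εH) / (1 - εL)) :=
  stmt8_general εL εH hL1 hH0 S₁ S₂ Q horth hemb
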